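/- arXiv:2203.13603 — 2 statements merged into one kernel-verified Lean document; each statement's English description precedes it below -/
import Mathlib

section
/- Suppose z : [t₀,∞) → ℝⁿ and ξ : [t₀,∞) → ℝᵐ satisfy the ISS estimate ‖z(t)‖ ≤ β(‖z(t₁)‖, t − t₁) + γ(sup_{t₁ ≤ τ ≤ t} ‖ξ(τ)‖) for all t ≥ t₁ ≥ t₀, where β is class KL and γ is class K. If ξ(t) → 0 as t → ∞ and ξ is bounded, then z(t) → 0 as t → ∞. -/
/-!
Restart the estimate at a late time `T`. Since `ξ(τ) → 0` and `γ` is continuous at `0` with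
`γ 0 = 0`, the gain term `γ (sup_{T ≤ τ ≤ t} ‖ξ τ‖)` is then small uniformly in `t ≥ T`, while the
transient term `β (‖z T‖, t - T)` tends to `0` as `t → ∞` for this fixed `T`.
-/

open Filter Topology Set

section TailSupremum

variable {E : Type*} [SeminormedAddCommGroup E] {ξ : ℝ → E}

theorem eventually_forall_iSup_Icc_norm_le (hξ : Tendsto ξ atTop (𝓝 0)) {δ : ℝ} (hδ : 0 < δ) :
    ∀ᶠ T : ℝ in atTop, ∀ t : ℝ, ⨆ τ : Icc T t, ‖ξ τ‖ ≤ δ := by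
  have hsmall : ∀ᶠ τ in atTop, ‖ξ τ‖ ≤ δ :=
    (tendsto_norm_zero.comp hξ).eventually (ge_mem_nhds hδ)
  filter_upwards [eventually_forall_ge_atTop.2 hsmall] with T hT t
  exact Real.iSup_le (fun τ => hT τ τ.2.1) hδ.le

theorem eventually_forall_comp_iSup_Icc_norm_lt {γ : ℝ → ℝ}
    (hγ : ContinuousWithinAt γ (Ici 0) 0) (hγ_zero : γ 0 = 0)
    (hξ : Tendsto ξ atTop (𝓝 0)) {ε : ℝ} (hε : 0 < ε) :
    ∀ᶠ T : ℝ in atTop, ∀ t : ℝ, γ (⨆ τ : Icc T t, ‖ξ τ‖) < ε := by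
  have hγ_small : ∀ᶠ s in 𝓝[Ici 0] 0, γ s < ε :=
    hγ.eventually (gt_mem_nhds (by rwa [hγ_zero]))
  obtain ⟨δ, hδ, hγδ⟩ := Metric.eventually_nhds_iff.1 (eventually_nhdsWithin_iff.1 hγ_small)
  filter_upwards [eventually_forall_iSup_Icc_norm_le hξ (half_pos hδ)] with T hT t
  have hsup_nonneg : 0 ≤ ⨆ τ : Icc T t, ‖ξ τ‖ := Real.iSup_nonneg fun _ => norm_nonneg _
  refine hγδ ?_ hsup_nonneg
  rw [Real.dist_0_eq_abs, abs_of_nonneg hsup_nonneg]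
  linarith [hT t]

end TailSupremum

theorem iss_state_convergence_general
    {n m : ℕ}
    (β : ℝ → ℝ → ℝ) (γ : ℝ → ℝ)
    -- γ is of class K
    (hγ_cont : ContinuousOn γ (Set.Ici 0))
    (hγ_zero : γ 0 = 0)
    -- β is of class KL
    (hβ_lim : ∀ r ≥ (0:ℝ), Tendsto (fun s => β r s) atTop (𝓝 0))
    (t₀ : ℝ)
    (z : ℝ → EuclideanSpace ℝ (Fin n)) (ξ : ℝ → EuclideanSpace ℝ (Fin m))
    -- the ISS estimate, valid for every restart time t₁ ≥ t₀
    (hISS : ∀ t₁ t : ℝ, t₀ ≤ t₁ → t₁ ≤ t →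
      ‖z t‖ ≤ β ‖z t₁‖ (t - t₁) + γ (⨆ τ : Set.Icc t₁ t, ‖ξ (τ : ℝ)‖))
    -- ξ is bounded and converges to 0
    (hξ_lim : Tendsto ξ atTop (𝓝 0)) :
    Tendsto z atTop (𝓝 0) := by
  rw [NormedAddGroup.tendsto_nhds_zero]
  intro ε hε
  obtain ⟨T, hγT, hT₀⟩ := ((eventually_forall_comp_iSup_Icc_norm_lt
    (hγ_cont 0 self_mem_Ici) hγ_zero hξ_lim (half_pos hε)).and (eventually_ge_atTop t₀)).exists
  have hshift : Tendsto (fun t => t - T) atTop atTop := by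
    simpa only [sub_eq_add_neg, id] using tendsto_atTop_add_const_right atTop (-T) tendsto_id
  have hβT : ∀ᶠ t in atTop, β ‖z T‖ (t - T) < ε / 2 :=
    ((hβ_lim _ (norm_nonneg _)).comp hshift).eventually (gt_mem_nhds (half_pos hε))
  filter_upwards [hβT, eventually_ge_atTop T] with t hβt hTt
  calc ‖z t‖ ≤ β ‖z T‖ (t - T) + γ (⨆ τ : Icc T t, ‖ξ τ‖) := hISS T t hT₀ hTt
    _ < ε / 2 + ε / 2 := add_lt_add hβt (hγT t)
    _ = ε := add_halves ε

/-- If z satisfies the ISS estimate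
‖z(t)‖ ≤ β(‖z(t₁)‖, t − t₁) + γ(sup_{t₁ ≤ τ ≤ t} ‖ξ(τ)‖) for all t ≥ t₁ ≥ t₀,
with β class KL and γ class K, and ξ is bounded with ξ(t) → 0, then z(t) → 0. -/
theorem iss_state_convergence
    {n m : ℕ}
    (β : ℝ → ℝ → ℝ) (γ : ℝ → ℝ)
    -- γ is of class K
    (hγ_cont : ContinuousOn γ (Set.Ici 0))
    (hγ_mono : StrictMonoOn γ (Set.Ici 0))
    (hγ_zero : γ 0 = 0)
    -- β is of class KL
    (hβ_contr : ∀ s ≥ (0:ℝ), ContinuousOn (fun r => β r s) (Set.Ici 0))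
    (hβ_monor : ∀ s ≥ (0:ℝ), StrictMonoOn (fun r => β r s) (Set.Ici 0))
    (hβ_zeror : ∀ s ≥ (0:ℝ), β 0 s = 0)
    (hβ_antis : ∀ r ≥ (0:ℝ), AntitoneOn (fun s => β r s) (Set.Ici 0))
    (hβ_lim : ∀ r ≥ (0:ℝ), Tendsto (fun s => β r s) atTop (𝓝 0))
    (t₀ : ℝ)
    (z : ℝ → EuclideanSpace ℝ (Fin n)) (ξ : ℝ → EuclideanSpace ℝ (Fin m))
    -- the ISS estimate, valid for every restart time t₁ ≥ t₀
    (hISS : ∀ t₁ t : ℝ, t₀ ≤ t₁ → t₁ ≤ t →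
      ‖z t‖ ≤ β ‖z t₁‖ (t - t₁) + γ (⨆ τ : Set.Icc t₁ t, ‖ξ (τ : ℝ)‖))
    -- ξ is bounded and converges to 0
    (hξ_bdd : ∃ M : ℝ, ∀ t : ℝ, t₀ ≤ t → ‖ξ t‖ ≤ M)
    (hξ_lim : Tendsto ξ atTop (𝓝 0)) :
    Tendsto z atTop (𝓝 0) :=
  iss_state_convergence_general β γ hγ_cont hγ_zero hβ_lim t₀ z ξ hISS hξ_lim
end

section
/- Consider the closed-loop interconnection of a nonlinear OSNI system H_p (storage V, V̇ ≤ wᵀẏ − ε‖ẏ‖², ε > 0, input w, output y) and a nonlinear NI system H_c (storage V_c, V̇_c ≤ u_cᵀẏ_c) connected via w = y_c and u_c = y. Then the function W = V + V_c − y_cᵀ y satisfies Ẇ ≤ −ε‖ẏ‖² ≤ 0 along trajectories of the interconnection. -/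
open scoped RealInnerProductSpace

section

variable {E : Type*} [NormedAddCommGroup E] [InnerProductSpace ℝ E]

theorem HasDerivAt.add_sub_inner {f g : ℝ → ℝ} {u v : ℝ → E} {f' g' t : ℝ} {u' v' : E}
    (hf : HasDerivAt f f' t) (hg : HasDerivAt g g' t)
    (hu : HasDerivAt u u' t) (hv : HasDerivAt v v' t) :
    HasDerivAt (fun s => f s + g s - ⟪u s, v s⟫) (f' + g' - ⟪u', v t⟫ - ⟪u t, v'⟫) t := by
  have hinner : HasDerivAt (fun s => ⟪u s, v s⟫) (⟪u', v t⟫ + ⟪u t, v'⟫) t := by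
    simpa only [add_comm] using hu.inner ℝ hv
  rw [sub_sub]
  exact (hf.add hg).sub hinner

/-- The cross term `⟪x, y⟫` cancels both supply rates `⟪x, y'⟫` and `⟪y, x'⟫`,
leaving only the output-strict dissipation. -/
theorem add_sub_inner_sub_inner_le_of_le {ε a b : ℝ} {x y x' y' : E}
    (hp : a ≤ ⟪x, y'⟫ - ε * ‖y'‖ ^ 2) (hc : b ≤ ⟪y, x'⟫) :
    a + b - ⟪x', y⟫ - ⟪x, y'⟫ ≤ -ε * ‖y'‖ ^ 2 := by
  rw [real_inner_comm] at hc
  linarith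

end

theorem interconnection_lyapunov_decrease_general
    {p : ℕ} (ε : ℝ) (hε : 0 < ε)
    -- storage functions evaluated along the trajectory, with their derivatives
    (V Vc Vd Vcd : ℝ → ℝ)
    (w uc y yc y' yc' : ℝ → EuclideanSpace ℝ (Fin p))
    (hV : ∀ t, HasDerivAt V (Vd t) t)
    (hVc : ∀ t, HasDerivAt Vc (Vcd t) t)
    (hy : ∀ t, HasDerivAt y (y' t) t)
    (hyc : ∀ t, HasDerivAt yc (yc' t) t)
    -- OSNI property of H_p and NI property of H_c
    (hOSNI : ∀ t, Vd t ≤ ⟪w t, y' t⟫ - ε * ‖y' t‖ ^ 2)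
    (hNI : ∀ t, Vcd t ≤ ⟪uc t, yc' t⟫)
    -- interconnection
    (hw : ∀ t, w t = yc t) (huc : ∀ t, uc t = y t)
    (t : ℝ) :
    HasDerivAt (fun s => V s + Vc s - ⟪yc s, y s⟫)
      (Vd t + Vcd t - ⟪yc' t, y t⟫ - ⟪yc t, y' t⟫) t ∧
    Vd t + Vcd t - ⟪yc' t, y t⟫ - ⟪yc t, y' t⟫ ≤ -ε * ‖y' t‖ ^ 2 ∧
    Vd t + Vcd t - ⟪yc' t, y t⟫ - ⟪yc t, y' t⟫ ≤ 0 := by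
  have hdecrease : Vd t + Vcd t - ⟪yc' t, y t⟫ - ⟪yc t, y' t⟫ ≤ -ε * ‖y' t‖ ^ 2 :=
    add_sub_inner_sub_inner_le_of_le (hw t ▸ hOSNI t) (huc t ▸ hNI t)
  have hdissipation : -ε * ‖y' t‖ ^ 2 ≤ 0 :=
    mul_nonpos_of_nonpos_of_nonneg (neg_nonpos.mpr hε.le) (sq_nonneg _)
  exact ⟨(hV t).add_sub_inner (hVc t) (hyc t) (hy t), hdecrease, hdecrease.trans hdissipation⟩

/-- For the interconnection of a nonlinear OSNI system H_p
(storage V, V̇ ≤ wᵀẏ − ε‖ẏ‖²) and a nonlinear NI system H_c (storage V_c,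
V̇_c ≤ u_cᵀẏ_c) via w = y_c and u_c = y, the function W = V + V_c − y_cᵀy
satisfies Ẇ ≤ −ε‖ẏ‖² ≤ 0 along trajectories. -/
theorem interconnection_lyapunov_decrease
    {p : ℕ} (ε : ℝ) (hε : 0 < ε)
    -- storage functions evaluated along the trajectory, with their derivatives
    (V Vc Vd Vcd : ℝ → ℝ)
    (hVpsd : ∀ t, 0 ≤ V t) (hVcpsd : ∀ t, 0 ≤ Vc t)
    (w uc y yc y' yc' : ℝ → EuclideanSpace ℝ (Fin p))
    (hV : ∀ t, HasDerivAt V (Vd t) t)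
    (hVc : ∀ t, HasDerivAt Vc (Vcd t) t)
    (hy : ∀ t, HasDerivAt y (y' t) t)
    (hyc : ∀ t, HasDerivAt yc (yc' t) t)
    -- OSNI property of H_p and NI property of H_c
    (hOSNI : ∀ t, Vd t ≤ ⟪w t, y' t⟫ - ε * ‖y' t‖ ^ 2)
    (hNI : ∀ t, Vcd t ≤ ⟪uc t, yc' t⟫)
    -- interconnection
    (hw : ∀ t, w t = yc t) (huc : ∀ t, uc t = y t)
    (t : ℝ) :
    HasDerivAt (fun s => V s + Vc s - ⟪yc s, y s⟫)
      (Vd t + Vcd t - ⟪yc' t, y t⟫ - ⟪yc t, y' t⟫) t ∧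
    Vd t + Vcd t - ⟪yc' t, y t⟫ - ⟪yc t, y' t⟫ ≤ -ε * ‖y' t‖ ^ 2 ∧
    Vd t + Vcd t - ⟪yc' t, y t⟫ - ⟪yc t, y' t⟫ ≤ 0 :=
  interconnection_lyapunov_decrease_general ε hε V Vc Vd Vcd w uc y yc y' yc' hV hVc hy hyc hOSNI
    hNI hw huc t
end
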